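/- arXiv:1903.00051 — 2 statements merged into one kernel-verified Lean document; each statement's English description precedes it below -/
import Mathlib

section
/- For every idempotent semicharacter ρ₀ ∈ E(Ŝ), the maximal subgroup of the compact semigroup Ŝ containing ρ₀ equals the coset ρ₀X. Precisely: ρ₀X is a group under pointwise multiplication with identity ρ₀, and if ψ ∈ Ŝ satisfies ρ₀ψ = ψ and there exists ψ' ∈ Ŝ with ρ₀ψ' = ψ' and ψψ' = ρ₀, then |ψ| = ρ₀ and ψ ∈ ρ₀X. -/
open Complex Topology Set

/-- The compact semigroup `Ŝ` of semicharacters of a discrete abelian monoid `S`: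
nonzero homomorphisms into the multiplicative semigroup of the closed unit disc,
realized as the set of functions `ψ : S → ℂ` with `ψ 1 = 1`, multiplicative, and
of modulus at most one, endowed with the topology of pointwise convergence. -/
def Shat (S : Type*) [CommMonoid S] : Set (S → ℂ) :=
  {ψ | ψ 1 = 1 ∧ (∀ s t, ψ (s * t) = ψ s * ψ t) ∧ ∀ s, ‖ψ s‖ ≤ 1}

/-- The group `X` of characters of `S`: semicharacters of modulus one. -/
def charGroup (S : Type*) [CommMonoid S] : Set (S → ℂ) :=
  {ψ | ψ ∈ Shat S ∧ ∀ s, ‖ψ s‖ = 1}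

/-- `Ŝ₊`: the set of nonnegative semicharacters of `S`. -/
def ShatPos (S : Type*) [CommMonoid S] : Set (S → ℂ) :=
  {ψ | ψ ∈ Shat S ∧ ∀ s, (ψ s).im = 0 ∧ 0 ≤ (ψ s).re}

/-- `E(Ŝ)`: the set of idempotent semicharacters (taking only the values `0` and `1`). -/
def idemSC (S : Type*) [CommMonoid S] : Set (S → ℂ) :=
  {ψ | ψ ∈ Shat S ∧ ∀ s, ψ s = 0 ∨ ψ s = 1}

/-- The modulus `|ψ|` of a semicharacter. -/
noncomputable def scMod {S : Type*} (ψ : S → ℂ) : S → ℂ :=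
  fun s => ((‖ψ s‖ : ℝ) : ℂ)

/-- The power `ρ^z` of a nonnegative semicharacter `ρ` (with `0^z := 0`). -/
noncomputable def scPow {S : Type*} (ρ : S → ℂ) (z : ℂ) : S → ℂ :=
  fun s => if ρ s = 0 then 0 else ρ s ^ z

/-- A function `F` on `Ŝ` is generalized analytic on `Ŝ ∖ X` if for all
`ρ ∈ Ŝ₊ ∖ X` and `ψ ∈ Ŝ ∖ X` the map `z ↦ F (ρ^z ψ)` is analytic on the open
right half-plane and continuous at `0` along `(0, ∞)`. -/
def GenAnalytic (S : Type*) [CommMonoid S] (F : (S → ℂ) → ℂ) : Prop :=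
  ∀ ρ ∈ ShatPos S \ charGroup S, ∀ ψ ∈ Shat S \ charGroup S,
    DifferentiableOn ℂ (fun z : ℂ => F (scPow ρ z * ψ)) {z : ℂ | 0 < z.re} ∧
    ContinuousWithinAt (fun t : ℝ => F (scPow ρ (t : ℂ) * ψ)) (Set.Ioi (0 : ℝ)) 0

/-- Membership in the uniform algebra `A(Ŝ)`: continuous on `Ŝ` and generalized
analytic on `Ŝ ∖ X`. -/
def MemA (S : Type*) [CommMonoid S] (F : (S → ℂ) → ℂ) : Prop :=
  ContinuousOn F (Shat S) ∧ GenAnalytic S F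

/-- Peak sets of the algebra `A(Ŝ)`. -/
def IsPeakSetA (S : Type*) [CommMonoid S] (P : Set (S → ℂ)) : Prop :=
  P ⊆ Shat S ∧ IsClosed P ∧
    ∃ f, MemA S f ∧ (∀ ψ ∈ P, f ψ = 1) ∧ ∀ ψ ∈ Shat S \ P, ‖f ψ‖ < 1

/-- `p`-points of the algebra `A(Ŝ)`: points of `Ŝ` that are intersections of peak sets. -/
def IsPPointA (S : Type*) [CommMonoid S] (p : S → ℂ) : Prop :=
  p ∈ Shat S ∧
    ∃ Ps : Set (Set (S → ℂ)), (∀ P ∈ Ps, IsPeakSetA S P) ∧ ⋂₀ Ps = {p}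

/-- The strong boundary `Γ` of `A(Ŝ)`: the set of all `p`-points. -/
def strongBoundary (S : Type*) [CommMonoid S] : Set (S → ℂ) :=
  {ψ | IsPPointA S ψ}

/-- The coset `ρX` of the character group. -/
def cosetX (S : Type*) [CommMonoid S] (ρ : S → ℂ) : Set (S → ℂ) :=
  {φ | ∃ χ ∈ charGroup S, φ = ρ * χ}

/-- `E₀(Ŝ)`: idempotents `ρ₀` admitting `ρ₁ ∈ Ŝ₊` with `ρ₁ = 1` on `S(ρ₀)` and
`0 < ρ₁ < 1` off `S(ρ₀)`. -/
def E0 (S : Type*) [CommMonoid S] : Set (S → ℂ) :=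
  {ρ₀ | ρ₀ ∈ idemSC S ∧ ∃ ρ₁ ∈ ShatPos S,
    (∀ s, ρ₀ s ≠ 0 → ρ₁ s = 1) ∧ ∀ s, ρ₀ s = 0 → 0 < (ρ₁ s).re ∧ (ρ₁ s).re < 1}

/-- `θ`: the indicator function of `{e}`. -/
noncomputable def theta (S : Type*) [CommMonoid S] : S → ℂ :=
  ({1} : Set S).indicator 1

/-- A closed boundary of `A(Ŝ)`: a closed subset of `Ŝ` on which every function of
`A(Ŝ)` attains its maximum modulus over `Ŝ`. -/
def IsClosedBoundaryA (S : Type*) [CommMonoid S] (B : Set (S → ℂ)) : Prop :=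
  B ⊆ Shat S ∧ IsClosed B ∧
    ∀ f, MemA S f → ∃ ψ ∈ B, ∀ φ ∈ Shat S, ‖f φ‖ ≤ ‖f ψ‖

/-- The Shilov boundary of `A(Ŝ)`: the smallest closed boundary. -/
def shilovA (S : Type*) [CommMonoid S] : Set (S → ℂ) :=
  ⋂₀ {B | IsClosedBoundaryA S B}

/-- An ideal of the semigroup `S`: a nonempty proper subset stable under multiplication
by `S`. -/
def IsIdealS (S : Type*) [CommMonoid S] (I : Set S) : Prop :=
  I.Nonempty ∧ I ≠ Set.univ ∧ ∀ s : S, ∀ a ∈ I, s * a ∈ I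

/-- A simple ideal: an ideal whose complement is a subsemigroup. -/
def IsSimpleIdealS (S : Type*) [CommMonoid S] (I : Set S) : Prop :=
  IsIdealS S I ∧ ∀ a b : S, a ∉ I → b ∉ I → a * b ∉ I

/-!
Off the face `{ρ₀ = 1}` we have `ψ = ρ₀ψ = 0`; on it `ψψ' = 1` with `|ψ|, |ψ'| ≤ 1` forces
`|ψ| = 1`. So `ψ` restricts to a circle-valued character of the face, a submonoid of `S`.
Since `S` is cancellative it embeds in its Grothendieck group, and the circle group is
divisible, hence an injective `ℤ`-module; so this character extends to a character `χ`
of `S`, and `ψ = ρ₀χ`.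
-/

open Function Algebra

theorem Circle.moduleBaer : Module.Baer ℤ (Additive Circle) :=
  letI : DivisibleBy (Additive Circle) ℤ :=
    Function.Surjective.divisibleBy (f := Circle.expHom) Circle.exp_surjective
      fun _ _ => map_zsmul _ _ _
  Module.Baer.of_divisible _

theorem MonoidHom.exists_circle_extension {A B : Type*} [CommGroup A] [CommGroup B]
    {i : A →* B} (hi : Injective i) (χ : A →* Circle) : ∃ χ' : B →* Circle, χ'.comp i = χ := by
  obtain ⟨h, hh⟩ :=
    Circle.moduleBaer.extension_property_addMonoidHom i.toAdditive hi χ.toAdditive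
  exact ⟨MonoidHom.toAdditive.symm h, MonoidHom.toAdditive.injective hh⟩

namespace Algebra.GrothendieckGroup

theorem lift_apply_of {M G : Type*} [CommMonoid M] [CommGroup G] (f : M →* G) (m : M) :
    lift f (of m) = f m := by
  simp [lift]

theorem exists_of_div_of {M : Type*} [CommMonoid M] (x : GrothendieckGroup M) :
    ∃ a b : M, x = of a / of b := by
  induction x using Localization.induction_on with
  | H p => exact ⟨p.1, p.2, by simp [← Localization.mk_one_eq_monoidOf_mk]⟩

theorem lift_of_comp_injective {M N : Type*} [CommMonoid M] [CommMonoid N] [IsCancelMul N]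
    {f : M →* N} (hf : Injective f) : Injective (lift (of.comp f)) := by
  refine (injective_iff_map_eq_one _).2 fun x hx => ?_
  obtain ⟨a, b, rfl⟩ := exists_of_div_of x
  simp only [map_div, lift_apply_of, MonoidHom.comp_apply, div_eq_one] at hx ⊢
  rw [hf (of_injective hx)]

end Algebra.GrothendieckGroup

theorem Submonoid.exists_circle_extension {M : Type*} [CommMonoid M] [IsCancelMul M]
    (N : Submonoid M) (χ : N →* Circle) : ∃ χ' : M →* Circle, ∀ n : N, χ' n = χ n := by
  obtain ⟨χ', hχ'⟩ := MonoidHom.exists_circle_extension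
    (GrothendieckGroup.lift_of_comp_injective N.subtype_injective) (GrothendieckGroup.lift χ)
  refine ⟨χ'.comp GrothendieckGroup.of, fun n => ?_⟩
  have := DFunLike.congr_fun hχ' (GrothendieckGroup.of n)
  rwa [MonoidHom.comp_apply, GrothendieckGroup.lift_apply_of, GrothendieckGroup.lift_apply_of]
    at this

theorem norm_eq_one_of_mul_eq_one {α : Type*} [NormedDivisionRing α] {a b : α}
    (ha : ‖a‖ ≤ 1) (hb : ‖b‖ ≤ 1) (hab : a * b = 1) : ‖a‖ = 1 := by
  have : ‖a‖ * ‖b‖ = 1 := by rw [← norm_mul, hab, norm_one]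
  nlinarith [norm_nonneg a, norm_nonneg b]

section Semicharacters

variable {S : Type*} [CommMonoid S]

@[simps]
def Shat.toMonoidHom {ψ : S → ℂ} (hψ : ψ ∈ Shat S) : S →* ℂ where
  toFun := ψ
  map_one' := hψ.1
  map_mul' := hψ.2.1

theorem one_mem_charGroup : (1 : S → ℂ) ∈ charGroup S :=
  ⟨⟨rfl, fun _ _ => (mul_one 1).symm, fun _ => norm_one.le⟩, fun _ => norm_one⟩

theorem mul_mem_charGroup {χ₁ χ₂ : S → ℂ} (h₁ : χ₁ ∈ charGroup S) (h₂ : χ₂ ∈ charGroup S) :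
    χ₁ * χ₂ ∈ charGroup S := by
  obtain ⟨⟨e₁, m₁, -⟩, n₁⟩ := h₁
  obtain ⟨⟨e₂, m₂, -⟩, n₂⟩ := h₂
  refine ⟨⟨by simp [e₁, e₂], fun s t => by simp only [Pi.mul_apply, m₁, m₂]; ring,
    fun s => by simp [n₁, n₂]⟩, fun s => by simp [n₁, n₂]⟩

theorem star_mem_charGroup {χ : S → ℂ} (h : χ ∈ charGroup S) : star χ ∈ charGroup S := by
  obtain ⟨⟨e, m, -⟩, n⟩ := h
  refine ⟨⟨by simp [e], fun s t => by simp [m], fun s => by simp [n]⟩, fun s => by simp [n]⟩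

theorem mul_star_of_mem_charGroup {χ : S → ℂ} (h : χ ∈ charGroup S) : χ * star χ = 1 := by
  funext s
  simp [Complex.mul_conj, Complex.normSq_eq_norm_sq, h.2 s]

theorem mem_charGroup_of_circle (χ : S →* Circle) : (fun s => (χ s : ℂ)) ∈ charGroup S :=
  ⟨⟨by simp, fun s t => by simp, fun s => (Circle.norm_coe _).le⟩, fun s => Circle.norm_coe _⟩

theorem mul_self_of_mem_idemSC {ρ : S → ℂ} (hρ : ρ ∈ idemSC S) : ρ * ρ = ρ := by
  funext s
  rcases hρ.2 s with h | h <;> simp [h]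

theorem mem_cosetX_of_scMod_eq [IsCancelMul S] {ρ ψ : S → ℂ} (hρ : ρ ∈ idemSC S)
    (hψ : ψ ∈ Shat S) (hmod : scMod ψ = ρ) : ψ ∈ cosetX S ρ := by
  subst hmod
  let χ₀ := (Shat.toMonoidHom hψ).submonoidComap (Submonoid.unitSphere ℂ)
  obtain ⟨χ, hχ⟩ := Submonoid.exists_circle_extension _ χ₀
  refine ⟨_, mem_charGroup_of_circle χ, funext fun s => ?_⟩
  rcases hρ.2 s with h | h
  · rw [Pi.mul_apply, h, zero_mul]
    simpa [scMod] using h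
  · have hs : s ∈ (Submonoid.unitSphere ℂ).comap (Shat.toMonoidHom hψ) :=
      mem_sphere_zero_iff_norm.2 (by simpa [scMod] using h)
    rw [Pi.mul_apply, h, one_mul, hχ ⟨s, hs⟩]
    rfl

theorem scMod_eq_of_mul_eq {ρ ψ ψ' : S → ℂ} (hρ : ρ ∈ idemSC S) (hψ : ψ ∈ Shat S)
    (hψ' : ψ' ∈ Shat S) (hfix : ρ * ψ = ψ) (hinv : ψ * ψ' = ρ) : scMod ψ = ρ := by
  funext s
  rcases hρ.2 s with h | h
  · have : ψ s = 0 := by rw [← congrFun hfix s, Pi.mul_apply, h, zero_mul]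
    simp [scMod, this, h]
  · have := norm_eq_one_of_mul_eq_one (hψ.2.2 s) (hψ'.2.2 s)
      (by rw [← Pi.mul_apply, hinv, h])
    simp [scMod, this, h]

section Coset

variable {ρ : S → ℂ}

theorem self_mem_cosetX : ρ ∈ cosetX S ρ := ⟨1, one_mem_charGroup, (mul_one ρ).symm⟩

theorem mul_mem_cosetX (hρ : ρ * ρ = ρ) {φ₁ φ₂ : S → ℂ} (h₁ : φ₁ ∈ cosetX S ρ)
    (h₂ : φ₂ ∈ cosetX S ρ) : φ₁ * φ₂ ∈ cosetX S ρ := by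
  obtain ⟨χ₁, hχ₁, rfl⟩ := h₁
  obtain ⟨χ₂, hχ₂, rfl⟩ := h₂
  exact ⟨χ₁ * χ₂, mul_mem_charGroup hχ₁ hχ₂, by rw [mul_mul_mul_comm, hρ]⟩

theorem mul_eq_of_mem_cosetX (hρ : ρ * ρ = ρ) {φ : S → ℂ} (h : φ ∈ cosetX S ρ) :
    ρ * φ = φ := by
  obtain ⟨χ, -, rfl⟩ := h
  rw [← mul_assoc, hρ]

theorem exists_mul_eq_of_mem_cosetX (hρ : ρ * ρ = ρ) {φ : S → ℂ} (h : φ ∈ cosetX S ρ) :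
    ∃ φ' ∈ cosetX S ρ, φ * φ' = ρ := by
  obtain ⟨χ, hχ, rfl⟩ := h
  exact ⟨ρ * star χ, ⟨star χ, star_mem_charGroup hχ, rfl⟩,
    by rw [mul_mul_mul_comm, hρ, mul_star_of_mem_charGroup hχ, mul_one]⟩

end Coset

end Semicharacters

/-- For every idempotent semicharacter `ρ₀`, the maximal subgroup of `Ŝ`
containing `ρ₀` equals `ρ₀X`: the coset `ρ₀X` is a group under pointwise multiplication
with identity `ρ₀`, and any `ψ ∈ Ŝ` with `ρ₀ψ = ψ` admitting `ψ' ∈ Ŝ` with `ρ₀ψ' = ψ'`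
and `ψψ' = ρ₀` satisfies `|ψ| = ρ₀` and `ψ ∈ ρ₀X`. -/
theorem stmt5 {S : Type*} [CommMonoid S] [IsCancelMul S]
    (ρ₀ : S → ℂ) (h : ρ₀ ∈ idemSC S) :
    ρ₀ ∈ cosetX S ρ₀ ∧
    (∀ φ₁ ∈ cosetX S ρ₀, ∀ φ₂ ∈ cosetX S ρ₀, φ₁ * φ₂ ∈ cosetX S ρ₀) ∧
    (∀ φ ∈ cosetX S ρ₀, ρ₀ * φ = φ) ∧
    (∀ φ ∈ cosetX S ρ₀, ∃ φ' ∈ cosetX S ρ₀, φ * φ' = ρ₀) ∧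
    (∀ ψ ∈ Shat S, ρ₀ * ψ = ψ →
      (∃ ψ' ∈ Shat S, ρ₀ * ψ' = ψ' ∧ ψ * ψ' = ρ₀) →
        scMod ψ = ρ₀ ∧ ψ ∈ cosetX S ρ₀) := by
  have hρ := mul_self_of_mem_idemSC h
  refine ⟨self_mem_cosetX, fun _ h₁ _ h₂ => mul_mem_cosetX hρ h₁ h₂,
    fun _ => mul_eq_of_mem_cosetX hρ, fun _ => exists_mul_eq_of_mem_cosetX hρ, ?_⟩
  rintro ψ hψ hfix ⟨ψ', hψ', -, hinv⟩
  have hmod := scMod_eq_of_mul_eq h hψ hψ' hfix hinv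
  exact ⟨hmod, mem_cosetX_of_scMod_eq h hψ hmod⟩
end

section
/- For every subset D of E(Ŝ), the closure in Ŝ of the set ⋃_{ρ ∈ D} ρX equals ⋃_{ρ ∈ cl(D)} ρX, where cl(D) is the closure of D in Ŝ. -/
open Complex Topology Set

/-! The union `⋃_{ρ ∈ D} ρX` is the pointwise product `D * X`. As `Ŝ` is compact Hausdorff
and `X` is compact, `cl(D) * X` is compact, hence closed, and it lies in `cl(D * X)` by
continuity of multiplication. -/

open scoped Pointwise

theorem closure_mul_of_isCompact_closure {M : Type*} [TopologicalSpace M] [T2Space M] [Mul M]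
    [ContinuousMul M] {s t : Set M} (hs : IsCompact (closure s)) (ht : IsCompact t) :
    closure (s * t) = closure s * t := by
  refine (closure_minimal (Set.mul_subset_mul_right subset_closure)
    (hs.mul ht).isClosed).antisymm ?_
  rintro _ ⟨x, hx, y, hy, rfl⟩
  exact map_mem_closure₂ continuous_mul hx (subset_closure hy)
    fun a ha b hb => Set.mul_mem_mul ha hb

section Semicharacters

variable (S : Type*) [CommMonoid S]

theorem isClosed_Shat : IsClosed (Shat S) := by
  simp only [Shat, Set.ofPred_and, Set.ofPred_forall]
  exact (isClosed_eq (continuous_apply 1) continuous_const).inter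
    ((isClosed_iInter fun s => isClosed_iInter fun t =>
        isClosed_eq (by fun_prop) (by fun_prop)).inter
      (isClosed_iInter fun s => isClosed_le (by fun_prop) continuous_const))

theorem isCompact_Shat : IsCompact (Shat S) := by
  refine (isCompact_univ_pi fun _ => isCompact_closedBall (0 : ℂ) 1).of_isClosed_subset
    (isClosed_Shat S) fun ψ hψ s _ => ?_
  simpa using hψ.2.2 s

theorem isCompact_charGroup : IsCompact (charGroup S) := by
  have : charGroup S = Shat S ∩ ⋂ s, {ψ | ‖ψ s‖ = 1} := by
    ext ψ
    simp [charGroup]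
  rw [this]
  exact (isCompact_Shat S).inter_right
    (isClosed_iInter fun s => isClosed_eq (by fun_prop) continuous_const)

theorem biUnion_cosetX (D : Set (S → ℂ)) : ⋃ ρ ∈ D, cosetX S ρ = D * charGroup S := by
  rw [← Set.iUnion_mul_left_image]
  congr! with ρ
  ext φ
  simp [cosetX, eq_comm]

end Semicharacters

theorem stmt12_general {S : Type*} [CommMonoid S]
    (D : Set (S → ℂ)) (hD : D ⊆ idemSC S) :
    closure (⋃ ρ ∈ D, cosetX S ρ) = ⋃ ρ ∈ closure D, cosetX S ρ := by
  rw [biUnion_cosetX, biUnion_cosetX]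
  refine closure_mul_of_isCompact_closure ?_ (isCompact_charGroup S)
  exact (isCompact_Shat S).closure_of_subset fun ρ hρ => (hD hρ).1

/-- For every subset `D` of `E(Ŝ)`, the closure of `⋃_{ρ ∈ D} ρX`
equals `⋃_{ρ ∈ cl(D)} ρX`. -/
theorem stmt12 {S : Type*} [CommMonoid S] [IsCancelMul S]
    (D : Set (S → ℂ)) (hD : D ⊆ idemSC S) :
    closure (⋃ ρ ∈ D, cosetX S ρ) = ⋃ ρ ∈ closure D, cosetX S ρ :=
  stmt12_general D hD
end
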